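/- arXiv:1707.02207 — 6 statements merged into one kernel-verified Lean document; each statement's English description precedes it below -/
import Mathlib

section
/- The columns of the Kelvin matrix satisfy the identities (α₁−α₂) x/|x|² = ∂₁(Γ(x)e₁) + ∂₂(Γ(x)e₂) and (α₁+α₂) x^⊥/|x|² = ∂₁(Γ(x)e₂) − ∂₂(Γ(x)e₁) for all x ≠ 0, where x^⊥ = (−x₂, x₁). -/
/-!
Everything follows from the gradient of the Kelvin matrix away from the origin,
`∂ₖΓᵢⱼ = α₁ δᵢⱼ xₖ/|x|² − α₂ (δᵢₖ xⱼ + δⱼₖ xᵢ)/|x|² + 2α₂ xᵢ xⱼ xₖ/|x|⁴`,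
obtained from the chain rule along coordinate lines. Taking the divergence of a column, the
cubic terms contract to `2α₂ xᵢ/|x|²`; taking the curl, they cancel by symmetry in `j, k`.
-/

open Real

/-- Partial derivative in the `j`-th coordinate direction of a function on `ℝ × ℝ`. -/
noncomputable def pd (j : Fin 2) (f : ℝ × ℝ → ℝ) (p : ℝ × ℝ) : ℝ :=
  if j = 0 then deriv (fun t => f (t, p.2)) p.1 else deriv (fun t => f (p.1, t)) p.2

/-- The `j`-th coordinate of a point of `ℝ × ℝ`. -/
def co (j : Fin 2) (p : ℝ × ℝ) : ℝ := if j = 0 then p.1 else p.2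

/-- The squared Euclidean norm on `ℝ × ℝ`. -/
def nsq (p : ℝ × ℝ) : ℝ := p.1 ^ 2 + p.2 ^ 2

/-- The Kelvin matrix `Γ_{ij}(x) = α₁ δ_{ij} ln|x| − α₂ x_i x_j / |x|²`. -/
noncomputable def Gam (α₁ α₂ : ℝ) (i j : Fin 2) (p : ℝ × ℝ) : ℝ :=
  α₁ * (if i = j then 1 else 0) * Real.log (Real.sqrt (nsq p)) - α₂ * co i p * co j p / nsq p

theorem nsq_nonneg (p : ℝ × ℝ) : 0 ≤ nsq p := by
  unfold nsq
  positivity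

theorem nsq_ne_zero {x : ℝ × ℝ} (hx : x ≠ 0) : nsq x ≠ 0 := by
  have : x.1 ≠ 0 ∨ x.2 ≠ 0 := by
    by_contra! h
    exact hx (Prod.ext h.1 h.2)
  unfold nsq
  rcases this with h | h <;> positivity

section Curve

variable {γ : ℝ → ℝ × ℝ} {v : ℝ × ℝ} {t : ℝ}

theorem hasDerivAt_co_comp (j : Fin 2) (hγ : HasDerivAt γ v t) :
    HasDerivAt (fun s => co j (γ s)) (co j v) t := by
  fin_cases j
  exacts [hasFDerivAt_fst.comp_hasDerivAt t hγ, hasFDerivAt_snd.comp_hasDerivAt t hγ]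

theorem hasDerivAt_nsq_comp (hγ : HasDerivAt γ v t) :
    HasDerivAt (fun s => nsq (γ s)) (2 * ((γ t).1 * v.1 + (γ t).2 * v.2)) t := by
  have h₁ : HasDerivAt (fun s => (γ s).1) v.1 t :=
    (hasFDerivAt_fst (p := γ t)).comp_hasDerivAt t hγ
  have h₂ : HasDerivAt (fun s => (γ s).2) v.2 t :=
    (hasFDerivAt_snd (p := γ t)).comp_hasDerivAt t hγ
  exact ((h₁.pow 2).add (h₂.pow 2)).congr_deriv (by simp only [Nat.cast_ofNat]; ring)

theorem hasDerivAt_log_sqrt_nsq_comp (hγ : HasDerivAt γ v t) (h : γ t ≠ 0) :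
    HasDerivAt (fun s => log (sqrt (nsq (γ s))))
      (((γ t).1 * v.1 + (γ t).2 * v.2) / nsq (γ t)) t := by
  simp only [log_sqrt (nsq_nonneg _)]
  exact (((hasDerivAt_nsq_comp hγ).log (nsq_ne_zero h)).div_const 2).congr_deriv (by ring)

theorem hasDerivAt_Gam_comp (α₁ α₂ : ℝ) (i j : Fin 2) (hγ : HasDerivAt γ v t) (h : γ t ≠ 0) :
    HasDerivAt (fun s => Gam α₁ α₂ i j (γ s))
      (α₁ * (if i = j then 1 else 0) * ((γ t).1 * v.1 + (γ t).2 * v.2) / nsq (γ t)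
        - α₂ * (co i v * co j (γ t) + co i (γ t) * co j v) / nsq (γ t)
        + 2 * α₂ * co i (γ t) * co j (γ t) * ((γ t).1 * v.1 + (γ t).2 * v.2) / nsq (γ t) ^ 2)
      t := by
  have hq := (((hasDerivAt_co_comp i hγ).const_mul α₂).mul (hasDerivAt_co_comp j hγ)).div
    (hasDerivAt_nsq_comp hγ) (nsq_ne_zero h)
  refine (((hasDerivAt_log_sqrt_nsq_comp hγ h).const_mul
    (α₁ * (if i = j then 1 else 0))).sub hq).congr_deriv ?_
  simp only [Pi.mul_apply]
  field_simp [nsq_ne_zero h]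
  ring

end Curve

theorem pd_Gam (α₁ α₂ : ℝ) (i j k : Fin 2) {x : ℝ × ℝ} (hx : x ≠ 0) :
    pd k (Gam α₁ α₂ i j) x
      = α₁ * (if i = j then 1 else 0) * co k x / nsq x
        - α₂ * ((if i = k then 1 else 0) * co j x + co i x * (if j = k then 1 else 0)) / nsq x
        + 2 * α₂ * co i x * co j x * co k x / nsq x ^ 2 := by
  fin_cases k
  · have hγ : HasDerivAt (fun t : ℝ => (t, x.2)) (1, 0) x.1 :=
      (hasDerivAt_id _).prodMk (hasDerivAt_const _ _)
    simp only [pd]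
    rw [(hasDerivAt_Gam_comp α₁ α₂ i j hγ hx).deriv]
    fin_cases i <;> fin_cases j <;> simp [co]
  · have hγ : HasDerivAt (fun t : ℝ => (x.1, t)) (0, 1) x.2 :=
      (hasDerivAt_const _ _).prodMk (hasDerivAt_id _)
    simp only [pd]
    rw [(hasDerivAt_Gam_comp α₁ α₂ i j hγ hx).deriv]
    fin_cases i <;> fin_cases j <;> simp [co]

theorem stmt1_general (α₁ α₂ : ℝ) :
    ∀ x : ℝ × ℝ, x ≠ 0 → ∀ i : Fin 2,
      ((α₁ - α₂) * co i x / nsq x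
          = pd 0 (Gam α₁ α₂ i 0) x + pd 1 (Gam α₁ α₂ i 1) x)
      ∧ ((α₁ + α₂) * (if i = 0 then -x.2 else x.1) / nsq x
          = pd 0 (Gam α₁ α₂ i 1) x - pd 1 (Gam α₁ α₂ i 0) x) := by
  intro x hx i
  have hn := nsq_ne_zero hx
  simp only [pd_Gam α₁ α₂ _ _ _ hx]
  fin_cases i <;> constructor <;> simp [co] <;> field_simp <;> unfold nsq <;> ring

/-- Identities for the columns of the Kelvin matrix:
`(α₁−α₂) x/|x|² = ∂₁(Γ(x)e₁) + ∂₂(Γ(x)e₂)` and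
`(α₁+α₂) x^⊥/|x|² = ∂₁(Γ(x)e₂) − ∂₂(Γ(x)e₁)` for `x ≠ 0`. -/
theorem stmt1 (lam mu α₁ α₂ : ℝ) (hmu : 0 < mu) (hlm : 0 < lam + mu)
    (hα₁ : α₁ = (1 / (4 * π)) * (1 / mu + 1 / (lam + 2 * mu)))
    (hα₂ : α₂ = (1 / (4 * π)) * (1 / mu - 1 / (lam + 2 * mu))) :
    ∀ x : ℝ × ℝ, x ≠ 0 → ∀ i : Fin 2,
      ((α₁ - α₂) * co i x / nsq x
          = pd 0 (Gam α₁ α₂ i 0) x + pd 1 (Gam α₁ α₂ i 1) x)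
      ∧ ((α₁ + α₂) * (if i = 0 then -x.2 else x.1) / nsq x
          = pd 0 (Gam α₁ α₂ i 1) x - pd 1 (Gam α₁ α₂ i 0) x) :=
  stmt1_general α₁ α₂
end

section
/- With q₁ as above, its second component equals α₂ · 4a x₁² x₂ / (((x₁+a)²+x₂²)((x₁−a)²+x₂²)) for x ∈ ℝ² \ {p₁, p₂}, and hence equals α₂ a^{-1} x₂ sinh²ζ(x). -/
open Real

/-- The second component of the singular function
`q₁(x) = Γ(x−p₁)e₁ − Γ(x−p₂)e₁ + α₂ a ((x−p₁)/|x−p₁|² + (x−p₂)/|x−p₂|²)` equals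
`α₂ · 4a x₁² x₂ / (((x₁+a)²+x₂²)((x₁−a)²+x₂²))`, and hence equals
`α₂ a⁻¹ x₂ sinh²ζ(x)` with `ζ(x) = ln|x−p₁| − ln|x−p₂|`. -/
theorem stmt7 (α₁ α₂ a x₁ x₂ : ℝ) (ha : 0 < a)
    (h1 : (x₁, x₂) ≠ ((-a : ℝ), (0 : ℝ))) (h2 : (x₁, x₂) ≠ ((a : ℝ), (0 : ℝ)))
    (A B : ℝ) (hA : A = (x₁ + a) ^ 2 + x₂ ^ 2) (hB : B = (x₁ - a) ^ 2 + x₂ ^ 2) :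
    ((-α₂ * x₂ * (x₁ + a) / A) - (-α₂ * x₂ * (x₁ - a) / B)
        + α₂ * a * (x₂ / A + x₂ / B)
      = α₂ * (4 * a * x₁ ^ 2 * x₂) / (A * B))
    ∧ ((-α₂ * x₂ * (x₁ + a) / A) - (-α₂ * x₂ * (x₁ - a) / B)
        + α₂ * a * (x₂ / A + x₂ / B)
      = α₂ * a⁻¹ * x₂ *
          (Real.sinh (Real.log (Real.sqrt A) - Real.log (Real.sqrt B))) ^ 2) := by
  have hApos : 0 < A := by
    rw [hA]
    rcases eq_or_ne x₂ 0 with h | h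
    · have hx : x₁ + a ≠ 0 := fun hh => h1 (by rw [h]; simp; linarith)
      positivity
    · positivity
  have hBpos : 0 < B := by
    rw [hB]
    rcases eq_or_ne x₂ 0 with h | h
    · have hx : x₁ - a ≠ 0 := fun hh => h2 (by rw [h]; simp; linarith)
      positivity
    · positivity
  have hAB : A - B = 4 * a * x₁ := by rw [hA, hB]; ring
  have key : (-α₂ * x₂ * (x₁ + a) / A) - (-α₂ * x₂ * (x₁ - a) / B)
        + α₂ * a * (x₂ / A + x₂ / B)
      = α₂ * (4 * a * x₁ ^ 2 * x₂) / (A * B) := by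
    field_simp
    linear_combination (α₂ * x₂ * x₁) * hAB
  refine ⟨key, key.trans ?_⟩
  have hsA' : Real.sqrt A ≠ 0 := (Real.sqrt_pos.mpr hApos).ne'
  have hsB' : Real.sqrt B ≠ 0 := (Real.sqrt_pos.mpr hBpos).ne'
  have hsinh : Real.sinh (Real.log (Real.sqrt A) - Real.log (Real.sqrt B))
      = (A - B) / (Real.sqrt A * Real.sqrt B) / 2 := by
    rw [Real.sinh_eq, Real.exp_neg, Real.exp_sub,
      Real.exp_log (Real.sqrt_pos.mpr hApos), Real.exp_log (Real.sqrt_pos.mpr hBpos),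
      inv_div, div_sub_div _ _ hsB' hsA', Real.mul_self_sqrt hApos.le,
      Real.mul_self_sqrt hBpos.le, mul_comm (Real.sqrt B)]
  rw [hsinh, div_pow, div_pow, mul_pow, Real.sq_sqrt hApos.le, Real.sq_sqrt hBpos.le, hAB]
  field_simp
  ring
end

section
/- The singular function q₁(x) = Γ(x−p₁)e₁ − Γ(x−p₂)e₁ + α₂ a ((x−p₁)/|x−p₁|² + (x−p₂)/|x−p₂|²) is a solution of the Lamé system μΔq₁ + (λ+μ)∇(∇·q₁) = 0 on ℝ² \ {p₁, p₂} and satisfies |q₁(x)| = O(|x|^{-1}) as |x| → ∞. -/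
open Real

/-- Components of the singular function
`q₁(x) = Γ(x−p₁)e₁ − Γ(x−p₂)e₁ + α₂ a ((x−p₁)/|x−p₁|² + (x−p₂)/|x−p₂|²)`,
with `p₁ = (−a,0)`, `p₂ = (a,0)`. -/
noncomputable def q1c (α₁ α₂ a : ℝ) (i : Fin 2) (p : ℝ × ℝ) : ℝ :=
  Gam α₁ α₂ i 0 (p.1 + a, p.2) - Gam α₁ α₂ i 0 (p.1 - a, p.2)
    + α₂ * a * (co i (p.1 + a, p.2) / nsq (p.1 + a, p.2)
        + co i (p.1 - a, p.2) / nsq (p.1 - a, p.2))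

/-!
The field `q₁` is the sum of the translates to `p₁` and `p₂` of two fields
`c₁ log|z| e₁ + c₂ z₁ z / |z|² + c₃ z / |z|²`, with `(c₁, c₂) = ±(α₁, -α₂)` and `c₃ = α₂ a`.
The Lamé operator is linear on `C²` fields and commutes with translations, and a direct
computation shows that it annihilates such a field off the origin when
`2 μ c₂ + (λ + μ) (c₁ + c₂) = 0`, which is the relation between the Kelvin constants.

For the decay, the logarithmic and homogeneous-of-degree-zero parts of the two translates cancel:
by the mean value theorem in the first variable their difference is at most `2a` times a
derivative of order `|x|⁻¹`, while the remaining terms are of order `|x|⁻¹` on their own.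
-/

open Filter Topology

section PartialDerivatives

variable {f g : ℝ × ℝ → ℝ} {p : ℝ × ℝ}

lemma pd_zero_apply : pd 0 f p = deriv (fun t => f (t, p.2)) p.1 := if_pos rfl

lemma pd_one_apply : pd 1 f p = deriv (fun t => f (p.1, t)) p.2 := if_neg (by decide)

lemma pd_congr (j : Fin 2) (h : f =ᶠ[𝓝 p] g) : pd j f p = pd j g p := by
  fin_cases j
  · simp only [Fin.zero_eta, pd_zero_apply]
    exact EventuallyEq.deriv_eq ((Continuous.prodMk_left p.2).continuousAt.tendsto.eventually h)
  · simp only [Fin.mk_one, pd_one_apply]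
    exact EventuallyEq.deriv_eq ((Continuous.prodMk_right p.1).continuousAt.tendsto.eventually h)

lemma pd_comp_add_const (j : Fin 2) (f : ℝ × ℝ → ℝ) (v : ℝ × ℝ) :
    (pd j fun q => f (q + v)) = fun q => pd j f (q + v) := by
  funext q
  fin_cases j
  · simp only [Fin.zero_eta, pd_zero_apply, Prod.fst_add, Prod.snd_add]
    exact deriv_comp_add_const (fun t => f (t, q.2 + v.2)) v.1 q.1
  · simp only [Fin.mk_one, pd_one_apply, Prod.fst_add, Prod.snd_add]
    exact deriv_comp_add_const (fun t => f (q.1 + v.1, t)) v.2 q.2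

lemma pd_eq_fderiv (j : Fin 2) (hf : DifferentiableAt ℝ f p) :
    pd j f p = fderiv ℝ f p (if j = 0 then (1, 0) else (0, 1)) := by
  fin_cases j
  · have h := hf.hasFDerivAt.comp_hasDerivAt (x := p.1) (f := fun t => (t, p.2))
      ((hasDerivAt_id p.1).prodMk (hasDerivAt_const p.1 p.2))
    simp only [Fin.zero_eta, pd_zero_apply, if_pos]
    exact h.deriv
  · have h := hf.hasFDerivAt.comp_hasDerivAt (x := p.2) (f := fun t => (p.1, t))
      ((hasDerivAt_const p.2 p.1).prodMk (hasDerivAt_id p.2))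
    simp only [Fin.mk_one, pd_one_apply, one_ne_zero, if_false]
    exact h.deriv

lemma pd_add (j : Fin 2) (hf : DifferentiableAt ℝ f p) (hg : DifferentiableAt ℝ g p) :
    pd j (fun q => f q + g q) p = pd j f p + pd j g p := by
  change pd j (f + g) p = _
  rw [pd_eq_fderiv j (hf.add hg), pd_eq_fderiv j hf, pd_eq_fderiv j hg, fderiv_add hf hg]
  rfl

lemma ContDiffAt.pd {n : ℕ} (j : Fin 2) (hf : ContDiffAt ℝ (n + 1) f p) :
    ContDiffAt ℝ n (pd j f) p := by
  have hfd : ∀ᶠ q in 𝓝 p, DifferentiableAt ℝ f q :=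
    (hf.eventually (by simp)).mono fun q hq => hq.differentiableAt (by simp)
  refine ((hf.fderiv_right le_rfl).clm_apply
    (contDiffAt_const (c := if j = 0 then ((1 : ℝ), (0 : ℝ)) else (0, 1)))).congr_of_eventuallyEq ?_
  filter_upwards [hfd] with q hq
  exact pd_eq_fderiv j hq

lemma pd_zero_eq_of_hasDerivAt {v : ℝ}
    (h : HasDerivAt (fun t => f (t, p.2)) v p.1) : pd 0 f p = v :=
  pd_zero_apply.trans h.deriv

lemma pd_one_eq_of_hasDerivAt {v : ℝ}
    (h : HasDerivAt (fun t => f (p.1, t)) v p.2) : pd 1 f p = v :=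
  pd_one_apply.trans h.deriv

end PartialDerivatives

noncomputable def lameOp (lam mu : ℝ) (u : Fin 2 → ℝ × ℝ → ℝ) (i : Fin 2) (p : ℝ × ℝ) : ℝ :=
  mu * (pd 0 (pd 0 (u i)) p + pd 1 (pd 1 (u i)) p)
    + (lam + mu) * pd i (fun q => pd 0 (u 0) q + pd 1 (u 1) q) p

section LameOperator

variable {lam mu : ℝ}

lemma lameOp_comp_add_const (u : Fin 2 → ℝ × ℝ → ℝ) (v : ℝ × ℝ) (i : Fin 2) (p : ℝ × ℝ) :
    lameOp lam mu (fun k q => u k (q + v)) i p = lameOp lam mu u i (p + v) := by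
  simp only [lameOp, pd_comp_add_const]
  rw [pd_comp_add_const i (fun q => pd 0 (u 0) q + pd 1 (u 1) q)]

lemma lameOp_add {u w : Fin 2 → ℝ × ℝ → ℝ} {p : ℝ × ℝ} (hu : ∀ k, ContDiffAt ℝ 2 (u k) p)
    (hw : ∀ k, ContDiffAt ℝ 2 (w k) p) (i : Fin 2) :
    lameOp lam mu (fun k q => u k q + w k q) i p = lameOp lam mu u i p + lameOp lam mu w i p := by
  have hdiff : ∀ {f : ℝ × ℝ → ℝ}, ContDiffAt ℝ 2 f p → ∀ᶠ q in 𝓝 p, DifferentiableAt ℝ f q :=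
    fun hf => (hf.eventually (by simp)).mono fun q hq => hq.differentiableAt (by simp)
  have hpd : ∀ j k, pd j (fun q => u k q + w k q) =ᶠ[𝓝 p] fun q => pd j (u k) q + pd j (w k) q :=
    fun j k => by
      filter_upwards [hdiff (hu k), hdiff (hw k)] with q hqu hqw
      exact pd_add j hqu hqw
  have hu' : ∀ j k, DifferentiableAt ℝ (pd j (u k)) p :=
    fun j k => ((hu k).pd (n := 1) j).differentiableAt (by simp)
  have hw' : ∀ j k, DifferentiableAt ℝ (pd j (w k)) p :=
    fun j k => ((hw k).pd (n := 1) j).differentiableAt (by simp)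
  have hdiv : (fun q => pd 0 (fun r => u 0 r + w 0 r) q + pd 1 (fun r => u 1 r + w 1 r) q)
      =ᶠ[𝓝 p] fun q => (pd 0 (u 0) q + pd 1 (u 1) q) + (pd 0 (w 0) q + pd 1 (w 1) q) := by
    filter_upwards [hpd 0 0, hpd 1 1] with q h0 h1
    rw [h0, h1]
    ring
  simp only [lameOp]
  rw [pd_congr 0 (hpd 0 i), pd_congr 1 (hpd 1 i), pd_congr i hdiv, pd_add 0 (hu' 0 i) (hw' 0 i),
    pd_add 1 (hu' 1 i) (hw' 1 i), pd_add (f := fun q => pd 0 (u 0) q + pd 1 (u 1) q)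
      (g := fun q => pd 0 (w 0) q + pd 1 (w 1) q) i ((hu' 0 0).add (hu' 1 1))
      ((hw' 0 0).add (hw' 1 1))]
  ring

end LameOperator

/-- `kelvinU` and `kelvinV` are the components at `z = (s, y)` of the field
`c₁ log|z| e₁ + c₂ z₁ z / |z|² + c₃ z / |z|²`; for `c₁ = α₁`, `c₂ = -α₂`, `c₃ = 0` it is `Γ(z) e₁`. -/
noncomputable def kelvinU (c₁ c₂ c₃ s y : ℝ) : ℝ :=
  c₁ * log (s ^ 2 + y ^ 2) / 2 + c₂ * s ^ 2 / (s ^ 2 + y ^ 2) + c₃ * s / (s ^ 2 + y ^ 2)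

noncomputable def kelvinV (c₂ c₃ s y : ℝ) : ℝ :=
  c₂ * s * y / (s ^ 2 + y ^ 2) + c₃ * y / (s ^ 2 + y ^ 2)

noncomputable def kelvinField (c₁ c₂ c₃ : ℝ) : Fin 2 → ℝ × ℝ → ℝ :=
  ![fun z => kelvinU c₁ c₂ c₃ z.1 z.2, fun z => kelvinV c₂ c₃ z.1 z.2]

noncomputable def dsKelvinU (c₁ c₂ c₃ s y : ℝ) : ℝ :=
  c₁ * s / (s ^ 2 + y ^ 2) + 2 * c₂ * s * y ^ 2 / (s ^ 2 + y ^ 2) ^ 2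
    + c₃ * (y ^ 2 - s ^ 2) / (s ^ 2 + y ^ 2) ^ 2

noncomputable def dyKelvinU (c₁ c₂ c₃ s y : ℝ) : ℝ :=
  c₁ * y / (s ^ 2 + y ^ 2) - 2 * c₂ * s ^ 2 * y / (s ^ 2 + y ^ 2) ^ 2
    - 2 * c₃ * s * y / (s ^ 2 + y ^ 2) ^ 2

noncomputable def dsKelvinV (c₂ c₃ s y : ℝ) : ℝ :=
  c₂ * y * (y ^ 2 - s ^ 2) / (s ^ 2 + y ^ 2) ^ 2 - 2 * c₃ * s * y / (s ^ 2 + y ^ 2) ^ 2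

noncomputable def dyKelvinV (c₂ c₃ s y : ℝ) : ℝ :=
  (c₂ * s + c₃) * (s ^ 2 - y ^ 2) / (s ^ 2 + y ^ 2) ^ 2

lemma hasDerivAt_sq_add_sq_left (s y : ℝ) : HasDerivAt (fun t => t ^ 2 + y ^ 2) (2 * s) s := by
  simpa using (hasDerivAt_pow 2 s).add_const (y ^ 2)

lemma hasDerivAt_sq_add_sq_right (s y : ℝ) : HasDerivAt (fun t => s ^ 2 + t ^ 2) (2 * y) y := by
  simpa using (hasDerivAt_pow 2 y).const_add (s ^ 2)

lemma hasDerivAt_sq_add_sq_sq_left (s y : ℝ) :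
    HasDerivAt (fun t => (t ^ 2 + y ^ 2) ^ 2) (4 * s * (s ^ 2 + y ^ 2)) s := by
  have h : HasDerivAt (fun t => (t ^ 2 + y ^ 2) ^ 2) (2 * (s ^ 2 + y ^ 2) ^ 1 * (2 * s)) s :=
    (hasDerivAt_sq_add_sq_left s y).pow 2
  exact h.congr_deriv (by ring)

lemma hasDerivAt_sq_add_sq_sq_right (s y : ℝ) :
    HasDerivAt (fun t => (s ^ 2 + t ^ 2) ^ 2) (4 * y * (s ^ 2 + y ^ 2)) y := by
  have h : HasDerivAt (fun t => (s ^ 2 + t ^ 2) ^ 2) (2 * (s ^ 2 + y ^ 2) ^ 1 * (2 * y)) y :=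
    (hasDerivAt_sq_add_sq_right s y).pow 2
  exact h.congr_deriv (by ring)

section KelvinDerivatives

variable (c₁ c₂ c₃ : ℝ) {s y : ℝ}

lemma hasDerivAt_kelvinU_left (h : s ^ 2 + y ^ 2 ≠ 0) :
    HasDerivAt (fun t => kelvinU c₁ c₂ c₃ t y) (dsKelvinU c₁ c₂ c₃ s y) s := by
  have hr := hasDerivAt_sq_add_sq_left s y
  refine (((((hr.log h).const_mul c₁).div_const 2).add
    (((hasDerivAt_pow 2 s).const_mul c₂).div hr h)).add
    (((hasDerivAt_id s).const_mul c₃).div hr h)).congr_deriv ?_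
  simp only [dsKelvinU, id]
  field_simp
  ring

lemma hasDerivAt_kelvinU_right (h : s ^ 2 + y ^ 2 ≠ 0) :
    HasDerivAt (fun t => kelvinU c₁ c₂ c₃ s t) (dyKelvinU c₁ c₂ c₃ s y) y := by
  have hr := hasDerivAt_sq_add_sq_right s y
  refine (((((hr.log h).const_mul c₁).div_const 2).add
    ((hasDerivAt_const y (c₂ * s ^ 2)).div hr h)).add
    ((hasDerivAt_const y (c₃ * s)).div hr h)).congr_deriv ?_
  simp only [dyKelvinU]
  field_simp
  ring

lemma hasDerivAt_kelvinV_left (h : s ^ 2 + y ^ 2 ≠ 0) :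
    HasDerivAt (fun t => kelvinV c₂ c₃ t y) (dsKelvinV c₂ c₃ s y) s := by
  have hr := hasDerivAt_sq_add_sq_left s y
  refine (((((hasDerivAt_id s).const_mul c₂).mul_const y).div hr h).add
    ((hasDerivAt_const s (c₃ * y)).div hr h)).congr_deriv ?_
  simp only [dsKelvinV, id]
  field_simp
  ring

lemma hasDerivAt_kelvinV_right (h : s ^ 2 + y ^ 2 ≠ 0) :
    HasDerivAt (fun t => kelvinV c₂ c₃ s t) (dyKelvinV c₂ c₃ s y) y := by
  have hr := hasDerivAt_sq_add_sq_right s y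
  refine ((((hasDerivAt_id y).const_mul (c₂ * s)).div hr h).add
    (((hasDerivAt_id y).const_mul c₃).div hr h)).congr_deriv ?_
  simp only [dyKelvinV, id]
  field_simp
  ring

lemma hasDerivAt_dsKelvinU_left (h : s ^ 2 + y ^ 2 ≠ 0) :
    HasDerivAt (fun t => dsKelvinU c₁ c₂ c₃ t y)
      (c₁ * (y ^ 2 - s ^ 2) / (s ^ 2 + y ^ 2) ^ 2
        + 2 * c₂ * y ^ 2 * (y ^ 2 - 3 * s ^ 2) / (s ^ 2 + y ^ 2) ^ 3
        - 2 * c₃ * s * (3 * y ^ 2 - s ^ 2) / (s ^ 2 + y ^ 2) ^ 3) s := by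
  have hr := hasDerivAt_sq_add_sq_left s y
  have hr2 := hasDerivAt_sq_add_sq_sq_left s y
  refine ((((hasDerivAt_id s).const_mul c₁).div hr h).add
    ((((hasDerivAt_id s).const_mul (2 * c₂)).mul_const (y ^ 2)).div hr2 (pow_ne_zero 2 h))).add
    ((((hasDerivAt_pow 2 s).const_sub (y ^ 2)).const_mul c₃).div hr2 (pow_ne_zero 2 h))
    |>.congr_deriv ?_
  simp only [id]
  field_simp
  ring

lemma hasDerivAt_dsKelvinU_right (h : s ^ 2 + y ^ 2 ≠ 0) :
    HasDerivAt (fun t => dsKelvinU c₁ c₂ c₃ s t)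
      (-2 * c₁ * s * y / (s ^ 2 + y ^ 2) ^ 2
        + 4 * c₂ * s * y * (s ^ 2 - y ^ 2) / (s ^ 2 + y ^ 2) ^ 3
        + 2 * c₃ * y * (3 * s ^ 2 - y ^ 2) / (s ^ 2 + y ^ 2) ^ 3) y := by
  have hr := hasDerivAt_sq_add_sq_right s y
  have hr2 := hasDerivAt_sq_add_sq_sq_right s y
  refine ((hasDerivAt_const y (c₁ * s)).div hr h).add
    (((hasDerivAt_pow 2 y).const_mul (2 * c₂ * s)).div hr2 (pow_ne_zero 2 h)) |>.add
    ((((hasDerivAt_pow 2 y).sub_const (s ^ 2)).const_mul c₃).div hr2 (pow_ne_zero 2 h))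
    |>.congr_deriv ?_
  field_simp
  ring

lemma hasDerivAt_dyKelvinU_right (h : s ^ 2 + y ^ 2 ≠ 0) :
    HasDerivAt (fun t => dyKelvinU c₁ c₂ c₃ s t)
      (c₁ * (s ^ 2 - y ^ 2) / (s ^ 2 + y ^ 2) ^ 2
        - 2 * s * (c₂ * s + c₃) * (s ^ 2 - 3 * y ^ 2) / (s ^ 2 + y ^ 2) ^ 3) y := by
  have hr := hasDerivAt_sq_add_sq_right s y
  have hr2 := hasDerivAt_sq_add_sq_sq_right s y
  refine ((((hasDerivAt_id y).const_mul c₁).div hr h).sub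
    (((hasDerivAt_id y).const_mul (2 * c₂ * s ^ 2)).div hr2 (pow_ne_zero 2 h))).sub
    (((hasDerivAt_id y).const_mul (2 * c₃ * s)).div hr2 (pow_ne_zero 2 h))
    |>.congr_deriv ?_
  simp only [id]
  field_simp
  ring

lemma hasDerivAt_dsKelvinV_left (h : s ^ 2 + y ^ 2 ≠ 0) :
    HasDerivAt (fun t => dsKelvinV c₂ c₃ t y)
      (-2 * c₂ * s * y * (3 * y ^ 2 - s ^ 2) / (s ^ 2 + y ^ 2) ^ 3
        - 2 * c₃ * y * (y ^ 2 - 3 * s ^ 2) / (s ^ 2 + y ^ 2) ^ 3) s := by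
  have hr2 := hasDerivAt_sq_add_sq_sq_left s y
  refine ((((hasDerivAt_pow 2 s).const_sub (y ^ 2)).const_mul (c₂ * y)).div hr2
    (pow_ne_zero 2 h)).sub
    ((((hasDerivAt_id s).const_mul (2 * c₃)).mul_const y).div hr2 (pow_ne_zero 2 h))
    |>.congr_deriv ?_
  simp only [id]
  field_simp
  ring

lemma hasDerivAt_dyKelvinV_left (h : s ^ 2 + y ^ 2 ≠ 0) :
    HasDerivAt (fun t => dyKelvinV c₂ c₃ t y)
      (c₂ * (s ^ 2 - y ^ 2) / (s ^ 2 + y ^ 2) ^ 2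
        + 2 * s * (c₂ * s + c₃) * (3 * y ^ 2 - s ^ 2) / (s ^ 2 + y ^ 2) ^ 3) s := by
  have hr2 := hasDerivAt_sq_add_sq_sq_left s y
  refine ((((hasDerivAt_id s).const_mul c₂).add_const c₃).mul
    ((hasDerivAt_pow 2 s).sub_const (y ^ 2))).div hr2 (pow_ne_zero 2 h) |>.congr_deriv ?_
  simp only [id, Pi.mul_apply]
  field_simp
  ring

lemma hasDerivAt_dyKelvinV_right (h : s ^ 2 + y ^ 2 ≠ 0) :
    HasDerivAt (fun t => dyKelvinV c₂ c₃ s t)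
      (-2 * y * (c₂ * s + c₃) * (3 * s ^ 2 - y ^ 2) / (s ^ 2 + y ^ 2) ^ 3) y := by
  have hr2 := hasDerivAt_sq_add_sq_sq_right s y
  refine (((hasDerivAt_pow 2 y).const_sub (s ^ 2)).const_mul (c₂ * s + c₃)).div hr2
    (pow_ne_zero 2 h) |>.congr_deriv ?_
  field_simp
  ring

end KelvinDerivatives

lemma sq_add_sq_ne_zero {z : ℝ × ℝ} (hz : z ≠ 0) : z.1 ^ 2 + z.2 ^ 2 ≠ 0 := by
  intro h
  apply hz
  ext
  · exact pow_eq_zero_iff two_ne_zero |>.mp (by nlinarith [sq_nonneg z.1, sq_nonneg z.2])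
  · exact pow_eq_zero_iff two_ne_zero |>.mp (by nlinarith [sq_nonneg z.1, sq_nonneg z.2])

lemma contDiffAt_kelvinField {n : WithTop ℕ∞} (c₁ c₂ c₃ : ℝ) (k : Fin 2) {z : ℝ × ℝ}
    (hz : z ≠ 0) : ContDiffAt ℝ n (kelvinField c₁ c₂ c₃ k) z := by
  have h := sq_add_sq_ne_zero hz
  fin_cases k
  · simp only [kelvinField, kelvinU, Fin.zero_eta, Matrix.cons_val_zero]
    fun_prop (disch := assumption)
  · simp only [kelvinField, kelvinV, Fin.mk_one, Matrix.cons_val_one, Matrix.cons_val_zero]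
    fun_prop (disch := assumption)

lemma lameOp_kelvinField_eq_zero {lam mu c₁ c₂ : ℝ} (c₃ : ℝ)
    (hc : 2 * mu * c₂ + (lam + mu) * (c₁ + c₂) = 0) (i : Fin 2) {z : ℝ × ℝ} (hz : z ≠ 0) :
    lameOp lam mu (kelvinField c₁ c₂ c₃) i z = 0 := by
  have hz' := sq_add_sq_ne_zero hz
  have hnear : ∀ᶠ q in 𝓝 z, q.1 ^ 2 + q.2 ^ 2 ≠ 0 :=
    (eventually_ne_nhds hz).mono fun q hq => sq_add_sq_ne_zero hq
  have hUs : pd 0 (kelvinField c₁ c₂ c₃ 0) =ᶠ[𝓝 z] fun q => dsKelvinU c₁ c₂ c₃ q.1 q.2 :=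
    hnear.mono fun q hq => pd_zero_eq_of_hasDerivAt (hasDerivAt_kelvinU_left c₁ c₂ c₃ hq)
  have hUy : pd 1 (kelvinField c₁ c₂ c₃ 0) =ᶠ[𝓝 z] fun q => dyKelvinU c₁ c₂ c₃ q.1 q.2 :=
    hnear.mono fun q hq => pd_one_eq_of_hasDerivAt (hasDerivAt_kelvinU_right c₁ c₂ c₃ hq)
  have hVs : pd 0 (kelvinField c₁ c₂ c₃ 1) =ᶠ[𝓝 z] fun q => dsKelvinV c₂ c₃ q.1 q.2 :=
    hnear.mono fun q hq => pd_zero_eq_of_hasDerivAt (hasDerivAt_kelvinV_left c₂ c₃ hq)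
  have hVy : pd 1 (kelvinField c₁ c₂ c₃ 1) =ᶠ[𝓝 z] fun q => dyKelvinV c₂ c₃ q.1 q.2 :=
    hnear.mono fun q hq => pd_one_eq_of_hasDerivAt (hasDerivAt_kelvinV_right c₂ c₃ hq)
  have hdiv : (fun q => pd 0 (kelvinField c₁ c₂ c₃ 0) q + pd 1 (kelvinField c₁ c₂ c₃ 1) q)
      =ᶠ[𝓝 z] fun q => dsKelvinU c₁ c₂ c₃ q.1 q.2 + dyKelvinV c₂ c₃ q.1 q.2 := by
    filter_upwards [hUs, hVy] with q h0 h1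
    rw [h0, h1]
  fin_cases i
  · simp only [lameOp, Fin.zero_eta]
    rw [pd_congr 0 hUs, pd_congr 1 hUy, pd_congr 0 hdiv,
      pd_zero_eq_of_hasDerivAt (hasDerivAt_dsKelvinU_left c₁ c₂ c₃ hz'),
      pd_one_eq_of_hasDerivAt (hasDerivAt_dyKelvinU_right c₁ c₂ c₃ hz'),
      pd_zero_eq_of_hasDerivAt ((hasDerivAt_dsKelvinU_left c₁ c₂ c₃ hz').add
        (hasDerivAt_dyKelvinV_left c₂ c₃ hz'))]
    field_simp
    linear_combination (z.2 ^ 2 - z.1 ^ 2) * (z.1 ^ 2 + z.2 ^ 2) * hc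
  · simp only [lameOp, Fin.mk_one]
    rw [pd_congr 0 hVs, pd_congr 1 hVy, pd_congr 1 hdiv,
      pd_zero_eq_of_hasDerivAt (hasDerivAt_dsKelvinV_left c₂ c₃ hz'),
      pd_one_eq_of_hasDerivAt (hasDerivAt_dyKelvinV_right c₂ c₃ hz'),
      pd_one_eq_of_hasDerivAt ((hasDerivAt_dsKelvinU_right c₁ c₂ c₃ hz').add
        (hasDerivAt_dyKelvinV_right c₂ c₃ hz'))]
    field_simp
    linear_combination (-2 * z.1 * z.2) * (z.1 ^ 2 + z.2 ^ 2) * hc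

lemma q1c_eq_kelvinField_add (α₁ α₂ a : ℝ) :
    q1c α₁ α₂ a = fun k q => kelvinField α₁ (-α₂) (α₂ * a) k (q + (a, 0))
      + kelvinField (-α₁) α₂ (α₂ * a) k (q + (-a, 0)) := by
  funext k q
  fin_cases k
  · simp only [q1c, Gam, co, nsq, kelvinField, kelvinU, Fin.zero_eta, Matrix.cons_val_zero,
      Prod.fst_add, Prod.snd_add, add_zero, ← sub_eq_add_neg, if_true]
    rw [log_sqrt (by positivity), log_sqrt (by positivity)]
    ring
  · simp only [q1c, Gam, co, nsq, kelvinField, kelvinV, Fin.mk_one, Matrix.cons_val_one,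
      Matrix.cons_val_zero, Prod.fst_add, Prod.snd_add, add_zero, one_ne_zero, if_true, if_false]
    ring

lemma kelvin_coeff_relation {lam mu α₁ α₂ : ℝ} (hmu : 0 < mu) (hlm : 0 < lam + mu)
    (hα₁ : α₁ = (1 / (4 * π)) * (1 / mu + 1 / (lam + 2 * mu)))
    (hα₂ : α₂ = (1 / (4 * π)) * (1 / mu - 1 / (lam + 2 * mu))) :
    2 * mu * (-α₂) + (lam + mu) * (α₁ + -α₂) = 0 := by
  have : lam + 2 * mu ≠ 0 := by linarith
  rw [hα₁, hα₂]
  field_simp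
  ring

lemma lameOp_q1c {lam mu α₁ α₂ a : ℝ} (hmu : 0 < mu) (hlm : 0 < lam + mu)
    (hα₁ : α₁ = (1 / (4 * π)) * (1 / mu + 1 / (lam + 2 * mu)))
    (hα₂ : α₂ = (1 / (4 * π)) * (1 / mu - 1 / (lam + 2 * mu)))
    {p : ℝ × ℝ} (hp₁ : p ≠ (-a, 0)) (hp₂ : p ≠ (a, 0)) (i : Fin 2) :
    lameOp lam mu (q1c α₁ α₂ a) i p = 0 := by
  have hA : p + (a, 0) ≠ 0 := fun h => hp₁ (by simpa using eq_neg_of_add_eq_zero_left h)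
  have hB : p + (-a, 0) ≠ 0 := fun h => hp₂ (by simpa using eq_neg_of_add_eq_zero_left h)
  have hcA := kelvin_coeff_relation hmu hlm hα₁ hα₂
  have hcB : 2 * mu * α₂ + (lam + mu) * (-α₁ + α₂) = 0 := by linarith
  rw [q1c_eq_kelvinField_add, lameOp_add, lameOp_comp_add_const, lameOp_comp_add_const,
    lameOp_kelvinField_eq_zero _ hcA i hA, lameOp_kelvinField_eq_zero _ hcB i hB, add_zero]
  · exact fun k => (contDiffAt_kelvinField _ _ _ k hA).comp p (contDiffAt_id.add contDiffAt_const)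
  · exact fun k => (contDiffAt_kelvinField _ _ _ k hB).comp p (contDiffAt_id.add contDiffAt_const)

lemma sq_le_two_mul_sq_add_sq {x y t n : ℝ} (hn : x ^ 2 + y ^ 2 = n ^ 2) (hn₀ : 0 ≤ n)
    (ht : 4 * |t - x| ≤ n) : n ^ 2 ≤ 2 * (t ^ 2 + y ^ 2) := by
  have hx : |x| ≤ n := abs_le_of_sq_le_sq (by nlinarith [sq_nonneg y]) hn₀
  have hxt : |x * (t - x)| ≤ n * (n / 4) := by
    rw [abs_mul]
    exact mul_le_mul hx (by linarith) (abs_nonneg _) hn₀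
  nlinarith [neg_abs_le (x * (t - x)), sq_nonneg (t - x)]

lemma abs_div_le_two_div {u A n : ℝ} (hn : 0 < n) (hu : u ^ 2 ≤ A) (hA : n ^ 2 ≤ 2 * A) :
    |u / A| ≤ 2 / n := by
  have hA₀ : 0 < A := by nlinarith
  rw [abs_div, abs_of_pos hA₀, div_le_div_iff₀ hA₀ hn]
  nlinarith [sq_abs u, abs_nonneg u, sq_nonneg (|u| * n - 2 * A)]

lemma abs_sub_le_of_hasDerivAt {g g' : ℝ → ℝ} {x b K : ℝ}
    (hg : ∀ t, |t - x| ≤ |b| → HasDerivAt g (g' t) t) (hK : ∀ t, |t - x| ≤ |b| → |g' t| ≤ K) :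
    |g (x + b) - g (x - b)| ≤ 2 * |b| * K := by
  have hmem : ∀ t, t ∈ Metric.closedBall x |b| ↔ |t - x| ≤ |b| := fun t => by
    rw [Metric.mem_closedBall, Real.dist_eq]
  have h := (convex_closedBall x |b|).norm_image_sub_le_of_norm_hasDerivWithin_le
    (x := x - b) (y := x + b) (fun t ht => (hg t ((hmem t).1 ht)).hasDerivWithinAt)
    (fun t ht => hK t ((hmem t).1 ht))
    ((hmem _).2 (by simp)) ((hmem _).2 (by simp))
  simp only [Real.norm_eq_abs, add_sub_sub_cancel] at h
  calc |g (x + b) - g (x - b)| ≤ K * |b + b| := h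
    _ = 2 * |b| * K := by rw [← two_mul, abs_mul, abs_two]; ring

lemma abs_dsKelvinU_le (c₁ c₂ s y : ℝ) :
    |dsKelvinU c₁ c₂ 0 s y| ≤ (|c₁| + 2 * |c₂|) * |s / (s ^ 2 + y ^ 2)| := by
  have hy : |y ^ 2 / (s ^ 2 + y ^ 2)| ≤ 1 := by
    rw [abs_of_nonneg (by positivity)]
    exact div_le_one_of_le₀ (by nlinarith [sq_nonneg s]) (by positivity)
  have e : dsKelvinU c₁ c₂ 0 s y
      = (c₁ + 2 * c₂ * (y ^ 2 / (s ^ 2 + y ^ 2))) * (s / (s ^ 2 + y ^ 2)) := by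
    simp only [dsKelvinU, sq (s ^ 2 + y ^ 2), ← div_div]
    ring
  rw [e, abs_mul]
  gcongr
  calc |c₁ + 2 * c₂ * (y ^ 2 / (s ^ 2 + y ^ 2))|
      ≤ |c₁| + 2 * |c₂| * |y ^ 2 / (s ^ 2 + y ^ 2)| := by
        refine (abs_add_le _ _).trans ?_
        rw [abs_mul, abs_mul, abs_two]
    _ ≤ |c₁| + 2 * |c₂| * 1 := by gcongr
    _ = |c₁| + 2 * |c₂| := by ring

lemma abs_dsKelvinV_le (c₂ s y : ℝ) :
    |dsKelvinV c₂ 0 s y| ≤ |c₂| * |y / (s ^ 2 + y ^ 2)| := by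
  have hq : |(y ^ 2 - s ^ 2) / (s ^ 2 + y ^ 2)| ≤ 1 := by
    rw [abs_div]
    refine div_le_one_of_le₀ ?_ (abs_nonneg _)
    rw [abs_of_nonneg (by positivity : (0 : ℝ) ≤ s ^ 2 + y ^ 2), abs_le]
    constructor <;> nlinarith [sq_nonneg s, sq_nonneg y]
  have e : dsKelvinV c₂ 0 s y
      = c₂ * (y / (s ^ 2 + y ^ 2)) * ((y ^ 2 - s ^ 2) / (s ^ 2 + y ^ 2)) := by
    simp only [dsKelvinV, sq (s ^ 2 + y ^ 2), ← div_div]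
    ring
  rw [e, abs_mul, abs_mul]
  calc |c₂| * |y / (s ^ 2 + y ^ 2)| * |(y ^ 2 - s ^ 2) / (s ^ 2 + y ^ 2)|
      ≤ |c₂| * |y / (s ^ 2 + y ^ 2)| * 1 := by gcongr
    _ = _ := mul_one _

lemma q1c_zero_eq (α₁ α₂ a x y : ℝ) :
    q1c α₁ α₂ a 0 (x, y) = kelvinU α₁ (-α₂) 0 (x + a) y - kelvinU α₁ (-α₂) 0 (x - a) y
      + α₂ * a * ((x + a) / ((x + a) ^ 2 + y ^ 2) + (x - a) / ((x - a) ^ 2 + y ^ 2)) := by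
  simp only [q1c, Gam, co, nsq, kelvinU, if_true]
  rw [log_sqrt (by positivity), log_sqrt (by positivity)]
  ring

lemma q1c_one_eq (α₁ α₂ a x y : ℝ) :
    q1c α₁ α₂ a 1 (x, y) = kelvinV (-α₂) 0 (x + a) y - kelvinV (-α₂) 0 (x - a) y
      + α₂ * a * (y / ((x + a) ^ 2 + y ^ 2) + y / ((x - a) ^ 2 + y ^ 2)) := by
  simp only [q1c, Gam, co, nsq, kelvinV, one_ne_zero, if_true, if_false]
  ring

lemma abs_q1c_zero_le (α₁ α₂ a : ℝ) {x y n : ℝ} (hn : x ^ 2 + y ^ 2 = n ^ 2) (hn₀ : 0 < n)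
    (ha : 4 * |a| ≤ n) :
    |q1c α₁ α₂ a 0 (x, y)| ≤ (4 * |α₁| + 12 * |α₂|) * |a| / n := by
  have hfar : ∀ t, |t - x| ≤ |a| → n ^ 2 ≤ 2 * (t ^ 2 + y ^ 2) := fun t ht =>
    sq_le_two_mul_sq_add_sq hn hn₀.le (by linarith)
  have hlin : ∀ t, |t - x| ≤ |a| → |t / (t ^ 2 + y ^ 2)| ≤ 2 / n := fun t ht =>
    abs_div_le_two_div hn₀ (by nlinarith [sq_nonneg y]) (hfar t ht)
  have hdiff := abs_sub_le_of_hasDerivAt (g := fun t => kelvinU α₁ (-α₂) 0 t y) (x := x) (b := a)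
    (K := (|α₁| + 2 * |α₂|) * (2 / n))
    (fun t ht => hasDerivAt_kelvinU_left α₁ (-α₂) 0 (by nlinarith [hfar t ht]))
    (fun t ht => (abs_dsKelvinU_le α₁ (-α₂) t y).trans (by
      rw [abs_neg]; exact mul_le_mul_of_nonneg_left (hlin t ht) (by positivity)))
  have hsum : |(x + a) / ((x + a) ^ 2 + y ^ 2) + (x - a) / ((x - a) ^ 2 + y ^ 2)|
      ≤ 2 / n + 2 / n := by
    exact (abs_add_le _ _).trans (add_le_add (hlin _ (by simp)) (hlin _ (by simp)))
  rw [q1c_zero_eq]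
  calc _ ≤ |kelvinU α₁ (-α₂) 0 (x + a) y - kelvinU α₁ (-α₂) 0 (x - a) y|
        + |α₂| * |a| * |(x + a) / ((x + a) ^ 2 + y ^ 2) + (x - a) / ((x - a) ^ 2 + y ^ 2)| := by
        rw [← abs_mul, ← abs_mul]
        exact abs_add_le _ _
    _ ≤ 2 * |a| * ((|α₁| + 2 * |α₂|) * (2 / n)) + |α₂| * |a| * (2 / n + 2 / n) := by gcongr
    _ = (4 * |α₁| + 12 * |α₂|) * |a| / n := by ring

lemma abs_q1c_one_le (α₁ α₂ a : ℝ) {x y n : ℝ} (hn : x ^ 2 + y ^ 2 = n ^ 2) (hn₀ : 0 < n)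
    (ha : 4 * |a| ≤ n) :
    |q1c α₁ α₂ a 1 (x, y)| ≤ 8 * |α₂| * |a| / n := by
  have hfar : ∀ t, |t - x| ≤ |a| → n ^ 2 ≤ 2 * (t ^ 2 + y ^ 2) := fun t ht =>
    sq_le_two_mul_sq_add_sq hn hn₀.le (by linarith)
  have hlin : ∀ t, |t - x| ≤ |a| → |y / (t ^ 2 + y ^ 2)| ≤ 2 / n := fun t ht =>
    abs_div_le_two_div hn₀ (by nlinarith [sq_nonneg t]) (hfar t ht)
  have hdiff := abs_sub_le_of_hasDerivAt (g := fun t => kelvinV (-α₂) 0 t y) (x := x) (b := a)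
    (K := |α₂| * (2 / n))
    (fun t ht => hasDerivAt_kelvinV_left (-α₂) 0 (by nlinarith [hfar t ht]))
    (fun t ht => (abs_dsKelvinV_le (-α₂) t y).trans (by
      rw [abs_neg]; exact mul_le_mul_of_nonneg_left (hlin t ht) (by positivity)))
  have hsum : |y / ((x + a) ^ 2 + y ^ 2) + y / ((x - a) ^ 2 + y ^ 2)| ≤ 2 / n + 2 / n := by
    exact (abs_add_le _ _).trans (add_le_add (hlin _ (by simp)) (hlin _ (by simp)))
  rw [q1c_one_eq]
  calc _ ≤ |kelvinV (-α₂) 0 (x + a) y - kelvinV (-α₂) 0 (x - a) y|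
        + |α₂| * |a| * |y / ((x + a) ^ 2 + y ^ 2) + y / ((x - a) ^ 2 + y ^ 2)| := by
        rw [← abs_mul, ← abs_mul]
        exact abs_add_le _ _
    _ ≤ 2 * |a| * (|α₂| * (2 / n)) + |α₂| * |a| * (2 / n + 2 / n) := by gcongr
    _ = 8 * |α₂| * |a| / n := by ring

lemma sqrt_sq_add_sq_le (u v : ℝ) : √(u ^ 2 + v ^ 2) ≤ |u| + |v| :=
  Real.sqrt_le_iff.2 ⟨by positivity, by nlinarith [sq_abs u, sq_abs v, abs_nonneg u, abs_nonneg v]⟩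

lemma q1c_decay (α₁ α₂ a : ℝ) :
    ∃ C > (0 : ℝ), ∃ R > (0 : ℝ), ∀ p : ℝ × ℝ, R ≤ √(nsq p) →
      √(q1c α₁ α₂ a 0 p ^ 2 + q1c α₁ α₂ a 1 p ^ 2) ≤ C / √(nsq p) := by
  refine ⟨(4 * |α₁| + 20 * |α₂|) * |a| + 1, by positivity, 4 * |a| + 1, by positivity, ?_⟩
  rintro ⟨x, y⟩ hR
  set n := √(nsq (x, y))
  have hn : x ^ 2 + y ^ 2 = n ^ 2 := (Real.sq_sqrt (by positivity)).symm
  have hn₀ : 0 < n := by linarith [abs_nonneg a]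
  have ha : 4 * |a| ≤ n := by linarith
  calc _ ≤ |q1c α₁ α₂ a 0 (x, y)| + |q1c α₁ α₂ a 1 (x, y)| := sqrt_sq_add_sq_le _ _
    _ ≤ (4 * |α₁| + 12 * |α₂|) * |a| / n + 8 * |α₂| * |a| / n :=
        add_le_add (abs_q1c_zero_le α₁ α₂ a hn hn₀ ha) (abs_q1c_one_le α₁ α₂ a hn hn₀ ha)
    _ ≤ ((4 * |α₁| + 20 * |α₂|) * |a| + 1) / n := by
        rw [← add_div]
        exact div_le_div_of_nonneg_right (by linarith) hn₀.le

theorem stmt8_general (lam mu α₁ α₂ a : ℝ) (hmu : 0 < mu) (hlm : 0 < lam + mu)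
    (hα₁ : α₁ = (1 / (4 * π)) * (1 / mu + 1 / (lam + 2 * mu)))
    (hα₂ : α₂ = (1 / (4 * π)) * (1 / mu - 1 / (lam + 2 * mu))) :
    (∀ p : ℝ × ℝ, p ≠ ((-a : ℝ), (0 : ℝ)) → p ≠ ((a : ℝ), (0 : ℝ)) → ∀ i : Fin 2,
        mu * (pd 0 (pd 0 (q1c α₁ α₂ a i)) p + pd 1 (pd 1 (q1c α₁ α₂ a i)) p)
          + (lam + mu)
            * pd i (fun q => pd 0 (q1c α₁ α₂ a 0) q + pd 1 (q1c α₁ α₂ a 1) q) p = 0)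
    ∧ ∃ C > (0:ℝ), ∃ R > (0:ℝ), ∀ p : ℝ × ℝ, R ≤ Real.sqrt (nsq p) →
        Real.sqrt ((q1c α₁ α₂ a 0 p) ^ 2 + (q1c α₁ α₂ a 1 p) ^ 2)
          ≤ C / Real.sqrt (nsq p) :=
  ⟨fun _ hp₁ hp₂ i => lameOp_q1c hmu hlm hα₁ hα₂ hp₁ hp₂ i, q1c_decay α₁ α₂ a⟩

/-- `q₁` solves the Lamé system on `ℝ² \ {p₁, p₂}` and decays like `|x|⁻¹` at infinity. -/
theorem stmt8 (lam mu α₁ α₂ a : ℝ) (hmu : 0 < mu) (hlm : 0 < lam + mu) (ha : 0 < a)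
    (hα₁ : α₁ = (1 / (4 * π)) * (1 / mu + 1 / (lam + 2 * mu)))
    (hα₂ : α₂ = (1 / (4 * π)) * (1 / mu - 1 / (lam + 2 * mu))) :
    (∀ p : ℝ × ℝ, p ≠ ((-a : ℝ), (0 : ℝ)) → p ≠ ((a : ℝ), (0 : ℝ)) → ∀ i : Fin 2,
        mu * (pd 0 (pd 0 (q1c α₁ α₂ a i)) p + pd 1 (pd 1 (q1c α₁ α₂ a i)) p)
          + (lam + mu)
            * pd i (fun q => pd 0 (q1c α₁ α₂ a 0) q + pd 1 (q1c α₁ α₂ a 1) q) p = 0)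
    ∧ ∃ C > (0:ℝ), ∃ R > (0:ℝ), ∀ p : ℝ × ℝ, R ≤ Real.sqrt (nsq p) →
        Real.sqrt ((q1c α₁ α₂ a 0 p) ^ 2 + (q1c α₁ α₂ a 1 p) ^ 2)
          ≤ C / Real.sqrt (nsq p) :=
  stmt8_general lam mu α₁ α₂ a hmu hlm hα₁ hα₂
end

section
/- Let ζ(x₁, x₂) = (1/2) ln(((x₁+a)² + x₂²)/((x₁−a)² + x₂²)). Suppose x = (x₁, x₂) satisfies |x₁| ≤ C₀(ε + x₂²) and a² ≤ C₁ ε for positive constants C₀, C₁, with (x₁ ± a)² + x₂² ≥ c(ε + x₂²) for some c > 0. Then there exist constants C (depending only on C₀, C₁, c) with |∂₁ζ(x)| ≤ C √ε/(ε + x₂²) and |∂₂ζ(x)| ≤ C √ε |x₂|/(ε + x₂²). -/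
/-!
Write `D± = (x₁ ± a)² + x₂²` and `E = ε + x₂²`. Then `∂₁ζ = (x₁+a)/D₊ - (x₁-a)/D₋` and
`∂₂ζ = x₂ (D₋ - D₊)/(D₊D₋) = -4a x₁ x₂/(D₊D₋)`. Since `x₁² + a² + x₂² = (D₊ + D₋)/2`, the numerator
of `∂₁ζ = 2a(x₂² + a² - x₁²)/(D₊D₋)` is at most `a(D₊ + D₋)`, so `|∂₁ζ| ≤ a/D₊ + a/D₋ ≤ 2a/(cE)`.
For `∂₂ζ` use `|x₁| ≤ C₀E` and `D₊D₋ ≥ c²E²`. Finally `a ≤ √C₁ √ε`.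
-/

open Real

noncomputable def zeta (a : ℝ) (p : ℝ × ℝ) : ℝ :=
  (1 / 2) * Real.log (((p.1 + a) ^ 2 + p.2 ^ 2) / ((p.1 - a) ^ 2 + p.2 ^ 2))

lemma HasDerivAt.half_log_div {f g : ℝ → ℝ} {f' g' x : ℝ} (hf : HasDerivAt f f' x)
    (hg : HasDerivAt g g' x) (hfx : f x ≠ 0) (hgx : g x ≠ 0) :
    HasDerivAt (fun t => (1 / 2) * Real.log (f t / g t)) ((f' / f x - g' / g x) / 2) x :=
  (((hf.div hg hgx).log (div_ne_zero hfx hgx)).const_mul (1 / 2)).congr_deriv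
    (by rw [Pi.div_apply]; field_simp)

section

variable {a c e x₁ x₂ : ℝ}

lemma pd_zero_zeta (hplus : (x₁ + a) ^ 2 + x₂ ^ 2 ≠ 0) (hminus : (x₁ - a) ^ 2 + x₂ ^ 2 ≠ 0) :
    pd 0 (zeta a) (x₁, x₂)
      = (x₁ + a) / ((x₁ + a) ^ 2 + x₂ ^ 2) - (x₁ - a) / ((x₁ - a) ^ 2 + x₂ ^ 2) := by
  have hf := (((hasDerivAt_id' x₁).add_const a).fun_pow 2).add_const (x₂ ^ 2)
  have hg := (((hasDerivAt_id' x₁).sub_const a).fun_pow 2).add_const (x₂ ^ 2)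
  rw [pd, if_pos rfl]
  exact (hf.half_log_div hg hplus hminus).deriv.trans (by norm_num; ring)

lemma pd_one_zeta (hplus : (x₁ + a) ^ 2 + x₂ ^ 2 ≠ 0) (hminus : (x₁ - a) ^ 2 + x₂ ^ 2 ≠ 0) :
    pd 1 (zeta a) (x₁, x₂) = x₂ / ((x₁ + a) ^ 2 + x₂ ^ 2) - x₂ / ((x₁ - a) ^ 2 + x₂ ^ 2) := by
  have hf := ((hasDerivAt_pow 2 x₂).const_add ((x₁ + a) ^ 2))
  have hg := ((hasDerivAt_pow 2 x₂).const_add ((x₁ - a) ^ 2))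
  rw [pd, if_neg one_ne_zero]
  exact (hf.half_log_div hg hplus hminus).deriv.trans (by norm_num; ring)

lemma abs_pd_zero_zeta_le (ha : 0 ≤ a) (hplus : 0 < (x₁ + a) ^ 2 + x₂ ^ 2)
    (hminus : 0 < (x₁ - a) ^ 2 + x₂ ^ 2) :
    |pd 0 (zeta a) (x₁, x₂)| ≤ a / ((x₁ + a) ^ 2 + x₂ ^ 2) + a / ((x₁ - a) ^ 2 + x₂ ^ 2) := by
  have hprod := mul_pos hplus hminus
  have hpd : pd 0 (zeta a) (x₁, x₂)
      = 2 * a * (x₂ ^ 2 + a ^ 2 - x₁ ^ 2) / (((x₁ + a) ^ 2 + x₂ ^ 2) * ((x₁ - a) ^ 2 + x₂ ^ 2)) := by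
    rw [pd_zero_zeta hplus.ne' hminus.ne']
    field_simp
    ring
  -- `x₁² + a² + x₂²` is the mean of the two denominators.
  have hsum : a / ((x₁ + a) ^ 2 + x₂ ^ 2) + a / ((x₁ - a) ^ 2 + x₂ ^ 2)
      = 2 * a * (x₂ ^ 2 + a ^ 2 + x₁ ^ 2) / (((x₁ + a) ^ 2 + x₂ ^ 2) * ((x₁ - a) ^ 2 + x₂ ^ 2)) := by
    field_simp
    ring
  rw [hpd, hsum, abs_div, abs_of_pos hprod]
  gcongr
  refine abs_le.2 ⟨?_, ?_⟩ <;> nlinarith [mul_nonneg ha (sq_nonneg x₁), mul_nonneg ha (sq_nonneg x₂),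
    mul_nonneg ha (sq_nonneg a)]

lemma abs_pd_one_zeta (hplus : 0 < (x₁ + a) ^ 2 + x₂ ^ 2) (hminus : 0 < (x₁ - a) ^ 2 + x₂ ^ 2) :
    |pd 1 (zeta a) (x₁, x₂)|
      = 4 * |a| * |x₁| * |x₂| / (((x₁ + a) ^ 2 + x₂ ^ 2) * ((x₁ - a) ^ 2 + x₂ ^ 2)) := by
  have hpd : pd 1 (zeta a) (x₁, x₂)
      = -(4 * a * x₁ * x₂) / (((x₁ + a) ^ 2 + x₂ ^ 2) * ((x₁ - a) ^ 2 + x₂ ^ 2)) := by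
    rw [pd_one_zeta hplus.ne' hminus.ne']
    field_simp
    ring
  rw [hpd, abs_div, abs_neg, abs_mul, abs_mul, abs_mul, abs_of_pos (mul_pos hplus hminus),
    abs_of_pos four_pos]

lemma abs_pd_zero_zeta_le_of_mul_le (hc : 0 < c) (ha : 0 ≤ a) (he : 0 < e)
    (hplus : c * e ≤ (x₁ + a) ^ 2 + x₂ ^ 2) (hminus : c * e ≤ (x₁ - a) ^ 2 + x₂ ^ 2) :
    |pd 0 (zeta a) (x₁, x₂)| ≤ 2 / c * a / e := by
  have hce := mul_pos hc he
  calc |pd 0 (zeta a) (x₁, x₂)|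
      ≤ a / ((x₁ + a) ^ 2 + x₂ ^ 2) + a / ((x₁ - a) ^ 2 + x₂ ^ 2) :=
        abs_pd_zero_zeta_le ha (hce.trans_le hplus) (hce.trans_le hminus)
    _ ≤ a / (c * e) + a / (c * e) := by gcongr
    _ = 2 / c * a / e := by field_simp; ring

lemma abs_pd_one_zeta_le_of_mul_le {C₀ : ℝ} (hc : 0 < c) (he : 0 < e) (hx₁ : |x₁| ≤ C₀ * e)
    (hplus : c * e ≤ (x₁ + a) ^ 2 + x₂ ^ 2) (hminus : c * e ≤ (x₁ - a) ^ 2 + x₂ ^ 2) :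
    |pd 1 (zeta a) (x₁, x₂)| ≤ 4 * C₀ / c ^ 2 * |a| * |x₂| / e := by
  have hce := mul_pos hc he
  rw [abs_pd_one_zeta (hce.trans_le hplus) (hce.trans_le hminus)]
  calc 4 * |a| * |x₁| * |x₂| / (((x₁ + a) ^ 2 + x₂ ^ 2) * ((x₁ - a) ^ 2 + x₂ ^ 2))
      ≤ 4 * |a| * |x₁| * |x₂| / ((c * e) * (c * e)) := by gcongr
    _ ≤ 4 * |a| * (C₀ * e) * |x₂| / ((c * e) * (c * e)) := by gcongr
    _ = 4 * C₀ / c ^ 2 * |a| * |x₂| / e := by field_simp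

end

/-- Gradient estimates for `ζ(x) = (1/2) ln(((x₁+a)²+x₂²)/((x₁−a)²+x₂²))` in the narrow
region: `|∂₁ζ| ≤ C√ε/(ε+x₂²)` and `|∂₂ζ| ≤ C√ε|x₂|/(ε+x₂²)`, with `C` depending only
on `C₀, C₁, c`. -/
theorem stmt15 (C₀ C₁ c : ℝ) (hC₀ : 0 < C₀) (hC₁ : 0 < C₁) (hc : 0 < c) :
    ∃ C > (0:ℝ), ∀ ε a x₁ x₂ : ℝ, 0 < ε → 0 < a →
      |x₁| ≤ C₀ * (ε + x₂ ^ 2) → a ^ 2 ≤ C₁ * ε →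
      c * (ε + x₂ ^ 2) ≤ (x₁ + a) ^ 2 + x₂ ^ 2 →
      c * (ε + x₂ ^ 2) ≤ (x₁ - a) ^ 2 + x₂ ^ 2 →
      |pd 0 (fun p => (1 / 2) *
          Real.log (((p.1 + a) ^ 2 + p.2 ^ 2) / ((p.1 - a) ^ 2 + p.2 ^ 2))) (x₁, x₂)|
        ≤ C * Real.sqrt ε / (ε + x₂ ^ 2)
      ∧ |pd 1 (fun p => (1 / 2) *
          Real.log (((p.1 + a) ^ 2 + p.2 ^ 2) / ((p.1 - a) ^ 2 + p.2 ^ 2))) (x₁, x₂)|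
        ≤ C * Real.sqrt ε * |x₂| / (ε + x₂ ^ 2) := by
  refine ⟨2 / c * √C₁ + 4 * C₀ / c ^ 2 * √C₁, by positivity, ?_⟩
  intro ε a x₁ x₂ hε ha hx₁ ha_sq hplus hminus
  have he : 0 < ε + x₂ ^ 2 := by positivity
  have ha_le : a ≤ √C₁ * √ε := by
    rw [← Real.sqrt_mul hC₁.le, Real.le_sqrt' ha]
    exact ha_sq
  refine ⟨(abs_pd_zero_zeta_le_of_mul_le hc ha.le he hplus hminus).trans ?_,
    (abs_pd_one_zeta_le_of_mul_le hc he hx₁ hplus hminus).trans ?_⟩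
  · calc 2 / c * a / (ε + x₂ ^ 2) ≤ 2 / c * (√C₁ * √ε) / (ε + x₂ ^ 2) := by gcongr
      _ ≤ (2 / c * √C₁ + 4 * C₀ / c ^ 2 * √C₁) * √ε / (ε + x₂ ^ 2) := by
        rw [← mul_assoc]; gcongr; exact le_add_of_nonneg_right (by positivity)
  · rw [abs_of_pos ha]
    calc 4 * C₀ / c ^ 2 * a * |x₂| / (ε + x₂ ^ 2)
        ≤ 4 * C₀ / c ^ 2 * (√C₁ * √ε) * |x₂| / (ε + x₂ ^ 2) := by gcongr
      _ ≤ (2 / c * √C₁ + 4 * C₀ / c ^ 2 * √C₁) * √ε * |x₂| / (ε + x₂ ^ 2) := by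
        rw [← mul_assoc]; gcongr; exact le_add_of_nonneg_left (by positivity)
end

section
/- Under the same hypotheses (|x₁| ≤ C₀(ε + x₂²), a² ≤ C₁ε, (x₁ ± a)² + x₂² ≥ c(ε + x₂²)), there is a constant C with |ζ(x)| ≤ C √ε, where ζ(x) = (1/2) ln(1 + 4a x₁/((x₁−a)² + x₂²)). -/
open Real

/-! The argument `u = 4 a x₁ / ((x₁ - a)² + x₂²)` of the logarithm is `O(√ε)`: `a ≤ √(C₁ ε)`,
while `|x₁| ≤ C₀ (ε + x₂²)` and the denominator is at least `c (ε + x₂²)`. Since `|u| ≤ 1/2`,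
`|log (1 + u)| ≤ 2 |u|`. -/

lemma abs_log_one_add_le_two_mul_abs {u : ℝ} (hu : |u| ≤ 1 / 2) :
    |log (1 + u)| ≤ 2 * |u| := by
  obtain ⟨hu_lo, hu_hi⟩ := abs_le.mp hu
  have hpos : 0 < 1 + u := by linarith
  rw [abs_le]
  constructor
  · have hlower : 1 - (1 + u)⁻¹ ≤ log (1 + u) := one_sub_inv_le_log_of_pos hpos
    have hquot : 1 - (1 + u)⁻¹ = u / (1 + u) := by field_simp; ring
    -- `1 + u ≥ 1/2`, so `u / (1 + u) ≥ 2u` when `u < 0`.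
    have hdiv : -(2 * |u|) ≤ u / (1 + u) := by
      rw [le_div_iff₀ hpos]
      rcases le_or_gt 0 u with h | h
      · rw [abs_of_nonneg h]; nlinarith
      · rw [abs_of_neg h]; nlinarith
    linarith
  · have := log_le_sub_one_of_pos hpos
    linarith [le_abs_self u, abs_nonneg u]

/-- In the narrow region, `|ζ(x)| ≤ C√ε`, where
`ζ(x) = (1/2) ln(1 + 4a x₁/((x₁−a)² + x₂²))`. -/
theorem stmt16 (C₀ C₁ c : ℝ) (hC₀ : 0 < C₀) (hC₁ : 0 < C₁) (hc : 0 < c) :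
    ∃ C > (0:ℝ), ∀ ε a x₁ x₂ : ℝ, 0 < ε → 0 < a →
      |x₁| ≤ C₀ * (ε + x₂ ^ 2) → a ^ 2 ≤ C₁ * ε →
      c * (ε + x₂ ^ 2) ≤ (x₁ + a) ^ 2 + x₂ ^ 2 →
      c * (ε + x₂ ^ 2) ≤ (x₁ - a) ^ 2 + x₂ ^ 2 →
      4 * a * |x₁| / ((x₁ - a) ^ 2 + x₂ ^ 2) ≤ 1 / 2 →
      |(1 / 2) * Real.log (1 + 4 * a * x₁ / ((x₁ - a) ^ 2 + x₂ ^ 2))|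
        ≤ C * Real.sqrt ε := by
  refine ⟨4 * C₀ * √C₁ / c, by positivity, ?_⟩
  intro ε a x₁ x₂ hε ha hx₁ ha_sq _ hD hsmall
  set D := (x₁ - a) ^ 2 + x₂ ^ 2
  have hDpos : 0 < D := lt_of_lt_of_le (by positivity) hD
  have habs : |4 * a * x₁ / D| = 4 * a * |x₁| / D := by
    rw [abs_div, abs_mul, abs_of_pos (by positivity : 0 < 4 * a), abs_of_pos hDpos]
  have hlog := abs_log_one_add_le_two_mul_abs (habs ▸ hsmall)
  have ha_le : a ≤ √C₁ * √ε := by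
    rw [← sqrt_mul hC₁.le]
    exact le_sqrt_of_sq_le ha_sq
  have hratio : 4 * a * |x₁| / D ≤ 4 * C₀ * √C₁ / c * √ε := by
    rw [div_le_iff₀ hDpos]
    calc 4 * a * |x₁| ≤ 4 * (√C₁ * √ε) * (C₀ * (ε + x₂ ^ 2)) := by gcongr
      _ = 4 * C₀ * √C₁ / c * √ε * (c * (ε + x₂ ^ 2)) := by field_simp
      _ ≤ 4 * C₀ * √C₁ / c * √ε * D := by gcongr
  calc |1 / 2 * log (1 + 4 * a * x₁ / D)| = 1 / 2 * |log (1 + 4 * a * x₁ / D)| := by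
        rw [abs_mul, abs_of_pos (by norm_num : (0 : ℝ) < 1 / 2)]
    _ ≤ 4 * a * |x₁| / D := by linarith
    _ ≤ 4 * C₀ * √C₁ / c * √ε := hratio
end

section
/- Let κ₁, κ₂ > 0, ε > 0, a² = 2ε/(κ₁+κ₂) + O(ε²), p₁ = (−a,0), p₂ = (a,0), and f(x, y) = y/((x+a)² + y²) + y/((x−a)² + y²). If |x| ≤ C₀(ε + y²) and (x ± a)² + y² ≥ c(ε+y²), then f(x, y) = (κ₁+κ₂) y/(ε + (κ₁+κ₂)y²/2) + O(1), i.e. there is a constant C independent of ε with |f(x,y) − (κ₁+κ₂)y/(ε + (κ₁+κ₂)y²/2)| ≤ C for all such (x, y) with |y| ≤ L. -/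
/-!
Put `κ = κ₁ + κ₂` and `D = ε + κ y² / 2`. The defect splits into the two halves
`y / ((x ± a)² + y²) - κ y / (2 D) = y (2ε - κ (x ± a)²) / (2 ((x ± a)² + y²) D)`.
For `ε ≤ 1`, `κ a² = 2ε + O(ε²)` cancels the constant part of `κ (x ± a)²`, and
`|x| ≲ ε + y²`, `|a| |y| ≲ ε + y²` bound the rest, so the numerator is `O((ε + y²)²)`,
while each factor of the denominator is `≳ ε + y²`. For `ε ≥ 1` every term is bounded on its own.
-/

theorem abs_div_le_div_of_le_mul {n d E k Q : ℝ} (hk : 0 < k) (hQ : 0 < Q)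
    (hn : |n| ≤ E * Q) (hd : k * Q ≤ d) : |n / d| ≤ E / k := by
  have hd0 : 0 < d := (mul_pos hk hQ).trans_le hd
  rw [abs_div, abs_of_pos hd0, ← mul_div_mul_right E k hQ.ne']
  exact div_le_div₀ ((abs_nonneg n).trans hn) hn (mul_pos hk hQ) hd

section NarrowGap

variable {κ ε x y b u : ℝ}

theorem div_sq_add_sq_sub_div_eq (hA : u ^ 2 + y ^ 2 ≠ 0) (hD : ε + κ * y ^ 2 / 2 ≠ 0) :
    y / (u ^ 2 + y ^ 2) - κ * y / (2 * (ε + κ * y ^ 2 / 2))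
      = y * (2 * ε - κ * u ^ 2) / (2 * (u ^ 2 + y ^ 2) * (ε + κ * y ^ 2 / 2)) := by
  rw [div_sub_div _ _ hA (mul_ne_zero two_ne_zero hD)]
  congr 1 <;> ring

theorem abs_two_mul_sub_mul_add_sq_le (hκ : 0 ≤ κ) :
    |2 * ε - κ * (x + b) ^ 2| ≤ |2 * ε - κ * b ^ 2| + κ * (x ^ 2 + 2 * (|x| * |b|)) := by
  have hxb : |x ^ 2 + 2 * (x * b)| ≤ x ^ 2 + 2 * (|x| * |b|) := by
    refine (abs_add_le _ _).trans ?_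
    rw [abs_of_nonneg (sq_nonneg x), abs_mul, abs_two, abs_mul]
  calc |2 * ε - κ * (x + b) ^ 2| = |(2 * ε - κ * b ^ 2) - κ * (x ^ 2 + 2 * (x * b))| := by
        congr 1; ring
    _ ≤ |2 * ε - κ * b ^ 2| + κ * |x ^ 2 + 2 * (x * b)| := by
        rw [← abs_of_nonneg hκ, ← abs_mul, abs_of_nonneg hκ]; exact abs_sub _ _
    _ ≤ _ := by gcongr

theorem sq_le_of_abs_sq_sub_le {C₄ : ℝ} (hε : 0 < ε) (hε1 : ε ≤ 1)
    (hC₄ : 0 ≤ C₄) (hb : |b ^ 2 - 2 * ε / κ| ≤ C₄ * ε ^ 2) :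
    b ^ 2 ≤ (2 / κ + C₄) * ε := by
  have hε2 : ε ^ 2 ≤ ε := by nlinarith
  have : 2 * ε / κ = 2 / κ * ε := by ring
  nlinarith [(abs_le.mp hb).2]

theorem abs_mul_abs_le_of_sq_le {M : ℝ} (hM : 0 ≤ M) (hε : 0 ≤ ε) (hb : b ^ 2 ≤ M * ε) :
    |b| * |y| ≤ (M + 1) / 2 * (ε + y ^ 2) := by
  nlinarith [sq_nonneg (|b| - |y|), sq_abs b, sq_abs y, mul_nonneg hM (sq_nonneg y)]

theorem abs_mul_two_mul_sub_sq_le {L C₀ C₄ : ℝ} (hκ : 0 < κ) (hε : 0 < ε) (hε1 : ε ≤ 1)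
    (hC₀ : 0 ≤ C₀) (hC₄ : 0 ≤ C₄) (hb : |b ^ 2 - 2 * ε / κ| ≤ C₄ * ε ^ 2)
    (hx : |x| ≤ C₀ * (ε + y ^ 2)) (hy : |y| ≤ L) :
    |y * (2 * ε - κ * (x + b) ^ 2)|
      ≤ κ * (C₄ * L + L * C₀ ^ 2 + C₀ * (2 / κ + C₄ + 1)) * (ε + y ^ 2) ^ 2 := by
  set P := ε + y ^ 2
  have hP : ε ≤ P := le_add_of_nonneg_right (sq_nonneg y)
  have hb' : |2 * ε - κ * b ^ 2| ≤ κ * (C₄ * ε ^ 2) := by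
    rw [show 2 * ε - κ * b ^ 2 = -κ * (b ^ 2 - 2 * ε / κ) by field_simp; ring, abs_mul,
      abs_neg, abs_of_pos hκ]
    gcongr
  have hby := abs_mul_abs_le_of_sq_le (y := y) (by positivity) hε.le
    (sq_le_of_abs_sq_sub_le hε hε1 hC₄ hb)
  have hx2 : x ^ 2 ≤ (C₀ * P) ^ 2 := by
    rw [← sq_abs x]; exact pow_le_pow_left₀ (abs_nonneg x) hx 2
  have hL : 0 ≤ L := (abs_nonneg y).trans hy
  have hε2 : ε ^ 2 ≤ P ^ 2 := pow_le_pow_left₀ hε.le hP 2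
  rw [abs_mul]
  calc |y| * |2 * ε - κ * (x + b) ^ 2|
      ≤ |y| * (κ * (C₄ * ε ^ 2) + κ * (x ^ 2 + 2 * (|x| * |b|))) := by
        gcongr; exact (abs_two_mul_sub_mul_add_sq_le hκ.le).trans (by gcongr)
    _ = κ * (C₄ * (|y| * ε ^ 2) + |y| * x ^ 2 + 2 * |x| * (|b| * |y|)) := by ring
    _ ≤ κ * (C₄ * (L * P ^ 2) + L * (C₀ * P) ^ 2 + 2 * (C₀ * P) * ((2 / κ + C₄ + 1) / 2 * P)) := by
        gcongr
    _ = _ := by ring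

theorem min_mul_le_add_mul_sq (hε : 0 ≤ ε) :
    min 1 (κ / 2) * (ε + y ^ 2) ≤ ε + κ * y ^ 2 / 2 := by
  have h1 := min_le_left 1 (κ / 2)
  have h2 := min_le_right 1 (κ / 2)
  nlinarith [sq_nonneg y]

theorem abs_div_sub_div_le_of_le_one {L C₀ C₄ c : ℝ} (hκ : 0 < κ) (hc : 0 < c) (hε : 0 < ε)
    (hε1 : ε ≤ 1) (hC₀ : 0 ≤ C₀) (hC₄ : 0 ≤ C₄) (hb : |b ^ 2 - 2 * ε / κ| ≤ C₄ * ε ^ 2)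
    (hx : |x| ≤ C₀ * (ε + y ^ 2)) (hA : c * (ε + y ^ 2) ≤ (x + b) ^ 2 + y ^ 2) (hy : |y| ≤ L) :
    |y / ((x + b) ^ 2 + y ^ 2) - κ * y / (2 * (ε + κ * y ^ 2 / 2))|
      ≤ κ * (C₄ * L + L * C₀ ^ 2 + C₀ * (2 / κ + C₄ + 1)) / (2 * c * min 1 (κ / 2)) := by
  have hP : 0 < ε + y ^ 2 := by positivity
  have hD := min_mul_le_add_mul_sq (y := y) (κ := κ) hε.le
  rw [div_sq_add_sq_sub_div_eq ((by positivity : 0 < c * (ε + y ^ 2)).trans_le hA).ne' (by positivity)]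
  refine abs_div_le_div_of_le_mul (by positivity) (pow_pos hP 2)
    (abs_mul_two_mul_sub_sq_le hκ hε hε1 hC₀ hC₄ hb hx hy) ?_
  calc 2 * c * min 1 (κ / 2) * (ε + y ^ 2) ^ 2
      = 2 * (c * (ε + y ^ 2)) * (min 1 (κ / 2) * (ε + y ^ 2)) := by ring
    _ ≤ _ := by gcongr

theorem abs_div_sub_div_le_of_one_le {L c : ℝ} (hκ : 0 < κ) (hc : 0 < c) (hε1 : 1 ≤ ε)
    (hA : c * (ε + y ^ 2) ≤ (x + b) ^ 2 + y ^ 2) (hy : |y| ≤ L) :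
    |y / ((x + b) ^ 2 + y ^ 2) - κ * y / (2 * (ε + κ * y ^ 2 / 2))| ≤ L / c + κ * L / 2 := by
  have hA' : c ≤ (x + b) ^ 2 + y ^ 2 := le_trans (by nlinarith [sq_nonneg y]) hA
  have hD : 1 ≤ ε + κ * y ^ 2 / 2 := by nlinarith [sq_nonneg y]
  refine (abs_sub _ _).trans (add_le_add ?_ ?_)
  · rw [abs_div, abs_of_pos (hc.trans_le hA')]
    exact div_le_div₀ ((abs_nonneg y).trans hy) hy hc hA'
  · have hL : 0 ≤ L := (abs_nonneg y).trans hy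
    rw [abs_div, abs_mul, abs_of_pos hκ, abs_of_pos (by linarith : 0 < 2 * (ε + κ * y ^ 2 / 2))]
    calc κ * |y| / (2 * (ε + κ * y ^ 2 / 2)) ≤ κ * L / (2 * 1) := by gcongr
      _ = κ * L / 2 := by ring

end NarrowGap

theorem exists_abs_div_sub_div_le {κ L C₀ C₄ c : ℝ} (hκ : 0 < κ) (hc : 0 < c) :
    ∃ B, ∀ ε, 0 < ε → ∀ x y b : ℝ, |b ^ 2 - 2 * ε / κ| ≤ C₄ * ε ^ 2 →
      |x| ≤ C₀ * (ε + y ^ 2) → c * (ε + y ^ 2) ≤ (x + b) ^ 2 + y ^ 2 → |y| ≤ L →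
      |y / ((x + b) ^ 2 + y ^ 2) - κ * y / (2 * (ε + κ * y ^ 2 / 2))| ≤ B := by
  refine ⟨max (κ * (C₄ * L + L * C₀ ^ 2 + C₀ * (2 / κ + C₄ + 1)) / (2 * c * min 1 (κ / 2)))
    (L / c + κ * L / 2), fun ε hε x y b hb hx hA hy => ?_⟩
  rcases le_total ε 1 with hε1 | hε1
  · have hC₀ : 0 ≤ C₀ := nonneg_of_mul_nonneg_left ((abs_nonneg x).trans hx) (by positivity)
    have hC₄ : 0 ≤ C₄ := nonneg_of_mul_nonneg_left ((abs_nonneg _).trans hb) (by positivity)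
    exact (abs_div_sub_div_le_of_le_one hκ hc hε hε1 hC₀ hC₄ hb hx hA hy).trans (le_max_left _ _)
  · exact (abs_div_sub_div_le_of_one_le hκ hc hε1 hA hy).trans (le_max_right _ _)

theorem stmt19_general (κ₁ κ₂ L C₀ C₄ c : ℝ)
    (hκ₁ : 0 < κ₁) (hκ₂ : 0 < κ₂) (hc : 0 < c)
    (a : ℝ → ℝ)
    (ha : ∀ ε : ℝ, 0 < ε → |(a ε) ^ 2 - 2 * ε / (κ₁ + κ₂)| ≤ C₄ * ε ^ 2) :
    ∃ C > (0:ℝ), ∀ ε : ℝ, 0 < ε → ∀ x y : ℝ,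
      |x| ≤ C₀ * (ε + y ^ 2) →
      c * (ε + y ^ 2) ≤ (x + a ε) ^ 2 + y ^ 2 →
      c * (ε + y ^ 2) ≤ (x - a ε) ^ 2 + y ^ 2 →
      |y| ≤ L →
      |(y / ((x + a ε) ^ 2 + y ^ 2) + y / ((x - a ε) ^ 2 + y ^ 2))
          - (κ₁ + κ₂) * y / (ε + (κ₁ + κ₂) * y ^ 2 / 2)| ≤ C := by
  obtain ⟨B, hB⟩ := exists_abs_div_sub_div_le (L := L) (C₀ := C₀) (C₄ := C₄)
    (by positivity : 0 < κ₁ + κ₂) hc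
  refine ⟨2 * max B 1, by positivity, fun ε hε x y hx hplus hminus hy => ?_⟩
  have hB₁ := hB ε hε x y (a ε) (ha ε hε) hx hplus hy
  have hB₂ := hB ε hε x y (-a ε) (by rw [neg_sq]; exact ha ε hε) hx
    (by rwa [← sub_eq_add_neg]) hy
  rw [← sub_eq_add_neg] at hB₂
  generalize ε + (κ₁ + κ₂) * y ^ 2 / 2 = D at hB₁ hB₂ ⊢
  calc _ = |(y / ((x + a ε) ^ 2 + y ^ 2) - (κ₁ + κ₂) * y / (2 * D))
          + (y / ((x - a ε) ^ 2 + y ^ 2) - (κ₁ + κ₂) * y / (2 * D))| := by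
        congr 1; ring
    _ ≤ B + B := (abs_add_le _ _).trans (add_le_add hB₁ hB₂)
    _ ≤ 2 * max B 1 := by linarith [le_max_left B 1]

/-- Leading-order identification of the singular part: with
`a² = 2ε/(κ₁+κ₂) + O(ε²)` and `f(x,y) = y/((x+a)²+y²) + y/((x−a)²+y²)`, in the narrow
region one has `f(x,y) = (κ₁+κ₂)y/(ε + (κ₁+κ₂)y²/2) + O(1)`, uniformly in `ε`. -/
theorem stmt19 (κ₁ κ₂ L C₀ C₄ c : ℝ)
    (hκ₁ : 0 < κ₁) (hκ₂ : 0 < κ₂) (hL : 0 < L) (hC₀ : 0 < C₀) (hc : 0 < c)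
    (hC₄ : 0 ≤ C₄)
    (a : ℝ → ℝ)
    (ha : ∀ ε : ℝ, 0 < ε → |(a ε) ^ 2 - 2 * ε / (κ₁ + κ₂)| ≤ C₄ * ε ^ 2) :
    ∃ C > (0:ℝ), ∀ ε : ℝ, 0 < ε → ∀ x y : ℝ,
      |x| ≤ C₀ * (ε + y ^ 2) →
      c * (ε + y ^ 2) ≤ (x + a ε) ^ 2 + y ^ 2 →
      c * (ε + y ^ 2) ≤ (x - a ε) ^ 2 + y ^ 2 →
      |y| ≤ L →
      |(y / ((x + a ε) ^ 2 + y ^ 2) + y / ((x - a ε) ^ 2 + y ^ 2))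
          - (κ₁ + κ₂) * y / (ε + (κ₁ + κ₂) * y ^ 2 / 2)| ≤ C :=
  stmt19_general κ₁ κ₂ L C₀ C₄ c hκ₁ hκ₂ hc a ha
end
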